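/- Let B, S, C be entrywise nonnegative, σ > 0, δ > 0, and suppose I_m is nonempty for at least one m. Then the function B′ ↦ G_B(B′, B; δ), restricted to the affine set of M×P matrices B′ with b′_{mp} = b_{mp} for all m and all p ∉ I_m, is strictly convex, and its unique minimizer on that set is B⁺ = U_B(B; δ); equivalently, B⁺ is the unique matrix in that set satisfying, for every m and every p ∈ I_m, d^m_{pp}(δ)·(b′_{mp} − b_{mp}) + (∇_B J)_{mp} = 0. -/
import Mathlib


open Matrix Classical Filter

noncomputable section

/-- Squared Frobenius norm. -/
def frobSq {m n : ℕ} (X : Matrix (Fin m) (Fin n) ℝ) : ℝ := ∑ i, ∑ j, (X i j) ^ 2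

/-- The BNMtF objective J(B,S,C). -/
def objJ {M N P : ℕ} (A : Matrix (Fin M) (Fin N) ℝ) (α β : ℝ)
    (B : Matrix (Fin M) (Fin P) ℝ) (S : Matrix (Fin P) (Fin P) ℝ) (C : Matrix (Fin P) (Fin N) ℝ) : ℝ :=
  (1 / 2) * frobSq (A - B * S * C) + (α / 2) * frobSq (C * Cᵀ - 1) +
    (β / 2) * frobSq (Bᵀ * B - 1)

/-- ∇_B J. -/
def gradB {M N P : ℕ} (A : Matrix (Fin M) (Fin N) ℝ) (β : ℝ)
    (B : Matrix (Fin M) (Fin P) ℝ) (S : Matrix (Fin P) (Fin P) ℝ) (C : Matrix (Fin P) (Fin N) ℝ) : Matrix (Fin M) (Fin P) ℝ :=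
  B * S * C * Cᵀ * Sᵀ - A * Cᵀ * Sᵀ + β • (B * Bᵀ * B) - β • B

/-- ∇_C J. -/
def gradC {M N P : ℕ} (A : Matrix (Fin M) (Fin N) ℝ) (α : ℝ)
    (B : Matrix (Fin M) (Fin P) ℝ) (S : Matrix (Fin P) (Fin P) ℝ) (C : Matrix (Fin P) (Fin N) ℝ) : Matrix (Fin P) (Fin N) ℝ :=
  Sᵀ * Bᵀ * B * S * C - Sᵀ * Bᵀ * A + α • (C * Cᵀ * C) - α • C

/-- ∇_S J. -/
def gradS {M N P : ℕ} (A : Matrix (Fin M) (Fin N) ℝ)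
    (B : Matrix (Fin M) (Fin P) ℝ) (S : Matrix (Fin P) (Fin P) ℝ) (C : Matrix (Fin P) (Fin N) ℝ) : Matrix (Fin P) (Fin P) ℝ :=
  Bᵀ * B * S * C * Cᵀ - Bᵀ * A * Cᵀ

/-- B-part KKT conditions. -/
def KKTB {M N P : ℕ} (A : Matrix (Fin M) (Fin N) ℝ) (β : ℝ)
    (B : Matrix (Fin M) (Fin P) ℝ) (S : Matrix (Fin P) (Fin P) ℝ) (C : Matrix (Fin P) (Fin N) ℝ) : Prop :=
  ∀ m p, 0 ≤ gradB A β B S C m p ∧ gradB A β B S C m p * B m p = 0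

/-- C-part KKT conditions. -/
def KKTC {M N P : ℕ} (A : Matrix (Fin M) (Fin N) ℝ) (α : ℝ)
    (B : Matrix (Fin M) (Fin P) ℝ) (S : Matrix (Fin P) (Fin P) ℝ) (C : Matrix (Fin P) (Fin N) ℝ) : Prop :=
  ∀ q n, 0 ≤ gradC A α B S C q n ∧ gradC A α B S C q n * C q n = 0

/-- S-part KKT conditions. -/
def KKTS {M N P : ℕ} (A : Matrix (Fin M) (Fin N) ℝ)
    (B : Matrix (Fin M) (Fin P) ℝ) (S : Matrix (Fin P) (Fin P) ℝ) (C : Matrix (Fin P) (Fin N) ℝ) : Prop :=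
  ∀ p q, 0 ≤ gradS A B S C p q ∧ gradS A B S C p q * S p q = 0

/-- Full KKT conditions. -/
def KKT {M N P : ℕ} (A : Matrix (Fin M) (Fin N) ℝ) (α β : ℝ)
    (B : Matrix (Fin M) (Fin P) ℝ) (S : Matrix (Fin P) (Fin P) ℝ) (C : Matrix (Fin P) (Fin N) ℝ) : Prop :=
  KKTB A β B S C ∧ KKTS A B S C ∧ KKTC A α B S C

/-- B̄. -/
def Bbar {M N P : ℕ} (A : Matrix (Fin M) (Fin N) ℝ) (β σ : ℝ)
    (B : Matrix (Fin M) (Fin P) ℝ) (S : Matrix (Fin P) (Fin P) ℝ) (C : Matrix (Fin P) (Fin N) ℝ) : Matrix (Fin M) (Fin P) ℝ :=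
  Matrix.of fun m p => if 0 ≤ gradB A β B S C m p then B m p else max (B m p) σ

/-- Denominator matrix of the additive B-update. -/
def denomB {M N P : ℕ} (A : Matrix (Fin M) (Fin N) ℝ) (β σ : ℝ)
    (B : Matrix (Fin M) (Fin P) ℝ) (S : Matrix (Fin P) (Fin P) ℝ) (C : Matrix (Fin P) (Fin N) ℝ) : Matrix (Fin M) (Fin P) ℝ :=
  Bbar A β σ B S C * S * C * Cᵀ * Sᵀ +
    β • (Bbar A β σ B S C * (Bbar A β σ B S C)ᵀ * Bbar A β σ B S C)

/-- Additive B-update U_B(B; δ). -/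
def UB {M N P : ℕ} (A : Matrix (Fin M) (Fin N) ℝ) (β σ : ℝ)
    (B : Matrix (Fin M) (Fin P) ℝ) (S : Matrix (Fin P) (Fin P) ℝ) (C : Matrix (Fin P) (Fin N) ℝ) (δ : ℝ) : Matrix (Fin M) (Fin P) ℝ :=
  Matrix.of fun m p =>
    B m p - Bbar A β σ B S C m p * gradB A β B S C m p / (denomB A β σ B S C m p + δ)

/-- I_m : set of non-KKT indices in row m of B. -/
def IsetB {M N P : ℕ} (A : Matrix (Fin M) (Fin N) ℝ) (β : ℝ)
    (B : Matrix (Fin M) (Fin P) ℝ) (S : Matrix (Fin P) (Fin P) ℝ) (C : Matrix (Fin P) (Fin N) ℝ) (m : Fin M) : Set (Fin P) :=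
  {p | (0 < B m p ∧ gradB A β B S C m p ≠ 0) ∨ (B m p = 0 ∧ gradB A β B S C m p < 0)}

/-- Diagonal entries d^m_{pp}(δ). -/
def dB {M N P : ℕ} (A : Matrix (Fin M) (Fin N) ℝ) (β σ : ℝ)
    (B : Matrix (Fin M) (Fin P) ℝ) (S : Matrix (Fin P) (Fin P) ℝ) (C : Matrix (Fin P) (Fin N) ℝ) (δ : ℝ) (m : Fin M) (p : Fin P) : ℝ :=
  if p ∈ IsetB A β B S C m then (denomB A β σ B S C m p + δ) / Bbar A β σ B S C m p else 0

/-- Auxiliary function G_B(B′, B; δ). -/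
def GB {M N P : ℕ} (A : Matrix (Fin M) (Fin N) ℝ) (α β σ : ℝ)
    (B : Matrix (Fin M) (Fin P) ℝ) (S : Matrix (Fin P) (Fin P) ℝ) (C : Matrix (Fin P) (Fin N) ℝ) (B' : Matrix (Fin M) (Fin P) ℝ) (δ : ℝ) : ℝ :=
  objJ A α β B S C + (∑ m, ∑ p, (B' m p - B m p) * gradB A β B S C m p) +
    (1 / 2) * ∑ m, ∑ p, dB A β σ B S C δ m p * (B' m p - B m p) ^ 2

/-- C̄. -/
def Cbar {M N P : ℕ} (A : Matrix (Fin M) (Fin N) ℝ) (α σ : ℝ)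
    (B : Matrix (Fin M) (Fin P) ℝ) (S : Matrix (Fin P) (Fin P) ℝ) (C : Matrix (Fin P) (Fin N) ℝ) : Matrix (Fin P) (Fin N) ℝ :=
  Matrix.of fun q n => if 0 ≤ gradC A α B S C q n then C q n else max (C q n) σ

/-- Denominator matrix of the additive C-update. -/
def denomC {M N P : ℕ} (A : Matrix (Fin M) (Fin N) ℝ) (α σ : ℝ)
    (B : Matrix (Fin M) (Fin P) ℝ) (S : Matrix (Fin P) (Fin P) ℝ) (C : Matrix (Fin P) (Fin N) ℝ) : Matrix (Fin P) (Fin N) ℝ :=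
  Sᵀ * Bᵀ * B * S * Cbar A α σ B S C +
    α • (Cbar A α σ B S C * (Cbar A α σ B S C)ᵀ * Cbar A α σ B S C)

/-- Additive C-update U_C(C; δ). -/
def UC {M N P : ℕ} (A : Matrix (Fin M) (Fin N) ℝ) (α σ : ℝ)
    (B : Matrix (Fin M) (Fin P) ℝ) (S : Matrix (Fin P) (Fin P) ℝ) (C : Matrix (Fin P) (Fin N) ℝ) (δ : ℝ) : Matrix (Fin P) (Fin N) ℝ :=
  Matrix.of fun q n =>
    C q n - Cbar A α σ B S C q n * gradC A α B S C q n / (denomC A α σ B S C q n + δ)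

/-- S̄. -/
def Sbar {M N P : ℕ} (A : Matrix (Fin M) (Fin N) ℝ) (σ : ℝ)
    (B : Matrix (Fin M) (Fin P) ℝ) (S : Matrix (Fin P) (Fin P) ℝ) (C : Matrix (Fin P) (Fin N) ℝ) : Matrix (Fin P) (Fin P) ℝ :=
  Matrix.of fun p q => if 0 ≤ gradS A B S C p q then S p q else max (S p q) σ

/-- Denominator matrix of the additive S-update. -/
def denomS {M N P : ℕ} (A : Matrix (Fin M) (Fin N) ℝ) (σ : ℝ)
    (B : Matrix (Fin M) (Fin P) ℝ) (S : Matrix (Fin P) (Fin P) ℝ) (C : Matrix (Fin P) (Fin N) ℝ) : Matrix (Fin P) (Fin P) ℝ :=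
  Bᵀ * B * Sbar A σ B S C * C * Cᵀ

/-- Additive S-update U_S(S; δ). -/
def US {M N P : ℕ} (A : Matrix (Fin M) (Fin N) ℝ) (σ : ℝ)
    (B : Matrix (Fin M) (Fin P) ℝ) (S : Matrix (Fin P) (Fin P) ℝ) (C : Matrix (Fin P) (Fin N) ℝ) (δ : ℝ) : Matrix (Fin P) (Fin P) ℝ :=
  Matrix.of fun p q =>
    S p q - Sbar A σ B S C p q * gradS A B S C p q / (denomS A σ B S C p q + δ)

/-- I_q : set of non-KKT indices in column q of S. -/
def IsetS {M N P : ℕ} (A : Matrix (Fin M) (Fin N) ℝ)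
    (B : Matrix (Fin M) (Fin P) ℝ) (S : Matrix (Fin P) (Fin P) ℝ) (C : Matrix (Fin P) (Fin N) ℝ) (q : Fin P) : Set (Fin P) :=
  {p | (0 < S p q ∧ gradS A B S C p q ≠ 0) ∨ (S p q = 0 ∧ gradS A B S C p q < 0)}

/-- Diagonal entries d^q_{pp}(δ). -/
def dS {M N P : ℕ} (A : Matrix (Fin M) (Fin N) ℝ) (σ : ℝ)
    (B : Matrix (Fin M) (Fin P) ℝ) (S : Matrix (Fin P) (Fin P) ℝ) (C : Matrix (Fin P) (Fin N) ℝ) (δ : ℝ) (p q : Fin P) : ℝ :=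
  if p ∈ IsetS A B S C q then (denomS A σ B S C p q + δ) / Sbar A σ B S C p q else 0

/-- Auxiliary function G_S(S′, S; δ). -/
def GS {M N P : ℕ} (A : Matrix (Fin M) (Fin N) ℝ) (α β σ : ℝ)
    (B : Matrix (Fin M) (Fin P) ℝ) (S : Matrix (Fin P) (Fin P) ℝ) (C : Matrix (Fin P) (Fin N) ℝ) (S' : Matrix (Fin P) (Fin P) ℝ) (δ : ℝ) : ℝ :=
  objJ A α β B S C + (∑ p, ∑ q, (S' p q - S p q) * gradS A B S C p q) +
    (1 / 2) * ∑ q, ∑ p, dS A σ B S C δ p q * (S' p q - S p q) ^ 2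


private lemma entryMul_nonneg {a b c : ℕ} {X : Matrix (Fin a) (Fin b) ℝ} {Y : Matrix (Fin b) (Fin c) ℝ}
    (hX : ∀ i j, 0 ≤ X i j) (hY : ∀ i j, 0 ≤ Y i j) : ∀ i j, 0 ≤ (X * Y) i j := by
  intro i j
  rw [Matrix.mul_apply]
  exact Finset.sum_nonneg fun k _ => mul_nonneg (hX i k) (hY k j)

private lemma myBbar_nonneg {M N P : ℕ} (A : Matrix (Fin M) (Fin N) ℝ) (β σ : ℝ)
    (B : Matrix (Fin M) (Fin P) ℝ) (S : Matrix (Fin P) (Fin P) ℝ) (C : Matrix (Fin P) (Fin N) ℝ)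
    (hB : ∀ m p, 0 ≤ B m p) : ∀ m p, 0 ≤ Bbar A β σ B S C m p := by
  intro m p
  unfold Bbar
  simp only [Matrix.of_apply]
  split
  · exact hB m p
  · exact le_trans (hB m p) (le_max_left _ _)

private lemma myBbar_pos {M N P : ℕ} (A : Matrix (Fin M) (Fin N) ℝ) (β σ : ℝ)
    (B : Matrix (Fin M) (Fin P) ℝ) (S : Matrix (Fin P) (Fin P) ℝ) (C : Matrix (Fin P) (Fin N) ℝ)
    (hσ : 0 < σ) {m : Fin M} {p : Fin P} (hp : p ∈ IsetB A β B S C m) :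
    0 < Bbar A β σ B S C m p := by
  simp only [IsetB, Set.mem_setOf_eq] at hp
  unfold Bbar
  simp only [Matrix.of_apply]
  rcases hp with ⟨h1, _⟩ | ⟨h1, h2⟩
  · split
    · exact h1
    · exact lt_max_of_lt_left h1
  · rw [if_neg (not_le.mpr h2)]
    exact lt_max_of_lt_right hσ

private lemma mydenomB_nonneg {M N P : ℕ} (A : Matrix (Fin M) (Fin N) ℝ) (β σ : ℝ)
    (B : Matrix (Fin M) (Fin P) ℝ) (S : Matrix (Fin P) (Fin P) ℝ) (C : Matrix (Fin P) (Fin N) ℝ)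
    (hβ : 0 < β) (hB : ∀ m p, 0 ≤ B m p) (hS : ∀ p q, 0 ≤ S p q) (hC : ∀ q n, 0 ≤ C q n) :
    ∀ m p, 0 ≤ denomB A β σ B S C m p := by
  intro m p
  have hBb := myBbar_nonneg A β σ B S C hB
  have h1 := entryMul_nonneg (entryMul_nonneg (entryMul_nonneg (entryMul_nonneg hBb hS) hC)
    (fun i j => hC j i)) (fun i j => hS j i)
  have h2 := entryMul_nonneg (entryMul_nonneg hBb (fun i j => hBb j i)) hBb
  unfold denomB
  simp only [Matrix.add_apply, Matrix.smul_apply, smul_eq_mul]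
  exact add_nonneg (h1 m p) (mul_nonneg hβ.le (h2 m p))

private lemma sum_merge {M P : ℕ} (F G : Fin M → Fin P → ℝ) :
    (∑ m, ∑ p, F m p) + (∑ m, ∑ p, G m p) = ∑ m, ∑ p, (F m p + G m p) := by
  rw [← Finset.sum_add_distrib]
  exact Finset.sum_congr rfl fun m _ => (Finset.sum_add_distrib).symm

theorem stmt_10 {M N P : ℕ} (A : Matrix (Fin M) (Fin N) ℝ) (hA : ∀ i j, 0 ≤ A i j)
    (α β σ : ℝ) (hα : 0 < α) (hβ : 0 < β) (hσ : 0 < σ)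
    (B : Matrix (Fin M) (Fin P) ℝ) (S : Matrix (Fin P) (Fin P) ℝ) (C : Matrix (Fin P) (Fin N) ℝ)
    (hB : ∀ m p, 0 ≤ B m p) (hS : ∀ p q, 0 ≤ S p q) (hC : ∀ q n, 0 ≤ C q n)
    (δ : ℝ) (hδ : 0 < δ)
    (hne : ∃ m, (IsetB A β B S C m).Nonempty) :
    StrictConvexOn ℝ
        {B' : Matrix (Fin M) (Fin P) ℝ | ∀ m p, p ∉ IsetB A β B S C m → B' m p = B m p}
        (fun B' => GB A α β σ B S C B' δ) ∧
    (∀ m p, p ∉ IsetB A β B S C m → UB A β σ B S C δ m p = B m p) ∧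
    (∀ B' : Matrix (Fin M) (Fin P) ℝ, (∀ m p, p ∉ IsetB A β B S C m → B' m p = B m p) →
      B' ≠ UB A β σ B S C δ →
        GB A α β σ B S C (UB A β σ B S C δ) δ < GB A α β σ B S C B' δ) ∧
    (∀ B' : Matrix (Fin M) (Fin P) ℝ, (∀ m p, p ∉ IsetB A β B S C m → B' m p = B m p) →
      ((∀ m p, p ∈ IsetB A β B S C m →
          dB A β σ B S C δ m p * (B' m p - B m p) + gradB A β B S C m p = 0) ↔
        B' = UB A β σ B S C δ)) := by
  -- basic positivity facts
  have hdpos : ∀ m p, p ∈ IsetB A β B S C m → 0 < dB A β σ B S C δ m p := by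
    intro m p hp
    unfold dB
    rw [if_pos hp]
    exact div_pos (by linarith [mydenomB_nonneg A β σ B S C hβ hB hS hC m p])
      (myBbar_pos A β σ B S C hσ hp)
  have hdnn : ∀ m p, 0 ≤ dB A β σ B S C δ m p := by
    intro m p
    by_cases hp : p ∈ IsetB A β B S C m
    · exact (hdpos m p hp).le
    · simp [dB, hp]
  -- part 2 : UB fixes non-I coordinates
  have hUeq : ∀ m p, p ∉ IsetB A β B S C m → UB A β σ B S C δ m p = B m p := by
    intro m p hp
    simp only [IsetB, Set.mem_setOf_eq, not_or] at hp
    push_neg at hp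
    have hnum : Bbar A β σ B S C m p * gradB A β B S C m p = 0 := by
      rcases (hB m p).eq_or_lt with h0 | h0
      · have hgnn : 0 ≤ gradB A β B S C m p := hp.2 h0.symm
        have hbb : Bbar A β σ B S C m p = B m p := by
          unfold Bbar; simp only [Matrix.of_apply]; rw [if_pos hgnn]
        rw [hbb, ← h0, zero_mul]
      · have hg0 : gradB A β B S C m p = 0 := hp.1 h0
        rw [hg0, mul_zero]
    unfold UB
    simp only [Matrix.of_apply]
    rw [hnum, zero_div, sub_zero]
  -- the KKT equations hold at UB
  have hkkt : ∀ m p, p ∈ IsetB A β B S C m →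
      dB A β σ B S C δ m p * (UB A β σ B S C δ m p - B m p) + gradB A β B S C m p = 0 := by
    intro m p hp
    have hb := myBbar_pos A β σ B S C hσ hp
    have hden : 0 < denomB A β σ B S C m p + δ := by
      linarith [mydenomB_nonneg A β σ B S C hβ hB hS hC m p]
    unfold dB UB
    rw [if_pos hp]
    simp only [Matrix.of_apply]
    field_simp
    ring
  -- rewrite GB as objJ plus a pointwise sum
  have merge := @sum_merge M P
  have GB_eq : ∀ w : Matrix (Fin M) (Fin P) ℝ, GB A α β σ B S C w δ =
      objJ A α β B S C + ∑ m, ∑ p, ((w m p - B m p) * gradB A β B S C m p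
        + 1 / 2 * (dB A β σ B S C δ m p * (w m p - B m p) ^ 2)) := by
    intro w
    unfold GB
    simp only [Finset.mul_sum]
    rw [add_assoc, merge]
  -- the key identity: GB z = GB UB + (1/2) Σ d (z - UB)^2 on the feasible set
  have hQ : ∀ z : Matrix (Fin M) (Fin P) ℝ, (∀ m p, p ∉ IsetB A β B S C m → z m p = B m p) →
      GB A α β σ B S C z δ = GB A α β σ B S C (UB A β σ B S C δ) δ
        + ∑ m, ∑ p, 1 / 2 * (dB A β σ B S C δ m p * (z m p - UB A β σ B S C δ m p) ^ 2) := by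
    intro z hz
    rw [GB_eq z, GB_eq (UB A β σ B S C δ), add_assoc, merge]
    congr 1
    refine Finset.sum_congr rfl fun m _ => Finset.sum_congr rfl fun p _ => ?_
    by_cases hp : p ∈ IsetB A β B S C m
    · have hk := hkkt m p hp
      linear_combination (z m p - UB A β σ B S C δ m p) * hk
    · have hd0 : dB A β σ B S C δ m p = 0 := by simp [dB, hp]
      rw [hz m p hp, hUeq m p hp, hd0]
      ring
  -- any feasible z ≠ UB gives a strictly positive correction sum
  have hposSum : ∀ z : Matrix (Fin M) (Fin P) ℝ,
      (∀ m p, p ∉ IsetB A β B S C m → z m p = B m p) → z ≠ UB A β σ B S C δ →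
      0 < ∑ m, ∑ p, 1 / 2 * (dB A β σ B S C δ m p * (z m p - UB A β σ B S C δ m p) ^ 2) := by
    intro z hz hzne
    obtain ⟨m0, p0, hmp⟩ : ∃ m p, z m p ≠ UB A β σ B S C δ m p := by
      by_contra hcon
      push_neg at hcon
      exact hzne (by ext m p; exact hcon m p)
    have hp0 : p0 ∈ IsetB A β B S C m0 := by
      by_contra hp
      exact hmp (by rw [hz m0 p0 hp, hUeq m0 p0 hp])
    have hterm_nn : ∀ m p, 0 ≤ 1 / 2 * (dB A β σ B S C δ m p *
        (z m p - UB A β σ B S C δ m p) ^ 2) := by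
      intro m p
      have := hdnn m p
      positivity
    apply Finset.sum_pos' (fun m _ => Finset.sum_nonneg fun p _ => hterm_nn m p)
    refine ⟨m0, Finset.mem_univ _, ?_⟩
    apply Finset.sum_pos' (fun p _ => hterm_nn m0 p)
    refine ⟨p0, Finset.mem_univ _, ?_⟩
    have hd := hdpos m0 p0 hp0
    have hne0 : z m0 p0 - UB A β σ B S C δ m0 p0 ≠ 0 := sub_ne_zero.mpr hmp
    positivity
  refine ⟨?_, hUeq, ?_, ?_⟩
  · -- strict convexity
    constructor
    · intro x hx y hy a b ha hb hab
      intro m p hp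
      simp only [Matrix.add_apply, Matrix.smul_apply, smul_eq_mul, hx m p hp, hy m p hp]
      linear_combination B m p * hab
    · intro x hx y hy hxy a b ha hb hab
      have hzset : ∀ m p, p ∉ IsetB A β B S C m → (a • x + b • y) m p = B m p := by
        intro m p hp
        simp only [Matrix.add_apply, Matrix.smul_apply, smul_eq_mul, hx m p hp, hy m p hp]
        linear_combination B m p * hab
      simp only [smul_eq_mul]
      rw [hQ x hx, hQ y hy, hQ (a • x + b • y) hzset]
      obtain ⟨m0, p0, hmp⟩ : ∃ m p, x m p ≠ y m p := by
        by_contra hcon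
        push_neg at hcon
        exact hxy (by ext m p; exact hcon m p)
      have hp0 : p0 ∈ IsetB A β B S C m0 := by
        by_contra hp
        exact hmp (by rw [hx m0 p0 hp, hy m0 p0 hp])
      have hle : ∀ m p, 1 / 2 * (dB A β σ B S C δ m p *
            ((a • x + b • y) m p - UB A β σ B S C δ m p) ^ 2)
          ≤ a * (1 / 2 * (dB A β σ B S C δ m p * (x m p - UB A β σ B S C δ m p) ^ 2))
            + b * (1 / 2 * (dB A β σ B S C δ m p * (y m p - UB A β σ B S C δ m p) ^ 2)) := by
        intro m p
        have hd := hdnn m p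
        have hb1 : b = 1 - a := by linarith
        subst hb1
        simp only [Matrix.add_apply, Matrix.smul_apply, smul_eq_mul]
        nlinarith [mul_nonneg (mul_nonneg hd ha.le)
          (mul_nonneg (by linarith : (0:ℝ) ≤ 1 - a) (sq_nonneg (x m p - y m p)))]
      have hlt0 : 1 / 2 * (dB A β σ B S C δ m0 p0 *
            ((a • x + b • y) m0 p0 - UB A β σ B S C δ m0 p0) ^ 2)
          < a * (1 / 2 * (dB A β σ B S C δ m0 p0 * (x m0 p0 - UB A β σ B S C δ m0 p0) ^ 2))
            + b * (1 / 2 * (dB A β σ B S C δ m0 p0 * (y m0 p0 - UB A β σ B S C δ m0 p0) ^ 2)) := by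
        have hd := hdpos m0 p0 hp0
        have hb1 : b = 1 - a := by linarith
        subst hb1
        simp only [Matrix.add_apply, Matrix.smul_apply, smul_eq_mul]
        have hxy2 : 0 < (x m0 p0 - y m0 p0) ^ 2 := by
          have := sub_ne_zero.mpr hmp
          positivity
        nlinarith [mul_pos (mul_pos hd (mul_pos ha (by linarith : (0:ℝ) < 1 - a))) hxy2]
      have hsum : (∑ m, ∑ p, 1 / 2 * (dB A β σ B S C δ m p *
            ((a • x + b • y) m p - UB A β σ B S C δ m p) ^ 2))
          < ∑ m, ∑ p, (a * (1 / 2 * (dB A β σ B S C δ m p * (x m p - UB A β σ B S C δ m p) ^ 2))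
            + b * (1 / 2 * (dB A β σ B S C δ m p * (y m p - UB A β σ B S C δ m p) ^ 2))) := by
        apply Finset.sum_lt_sum
          (fun m _ => Finset.sum_le_sum fun p _ => hle m p)
        exact ⟨m0, Finset.mem_univ _,
          Finset.sum_lt_sum (fun p _ => hle m0 p) ⟨p0, Finset.mem_univ _, hlt0⟩⟩
      have hsplit : (∑ m, ∑ p, (a * (1 / 2 * (dB A β σ B S C δ m p *
            (x m p - UB A β σ B S C δ m p) ^ 2))
            + b * (1 / 2 * (dB A β σ B S C δ m p * (y m p - UB A β σ B S C δ m p) ^ 2))))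
          = a * (∑ m, ∑ p, 1 / 2 * (dB A β σ B S C δ m p * (x m p - UB A β σ B S C δ m p) ^ 2))
            + b * (∑ m, ∑ p, 1 / 2 * (dB A β σ B S C δ m p *
              (y m p - UB A β σ B S C δ m p) ^ 2)) := by
        simp only [Finset.mul_sum, ← Finset.sum_add_distrib]
      rw [hsplit] at hsum
      have hcomb : a * (GB A α β σ B S C (UB A β σ B S C δ) δ
            + ∑ m, ∑ p, 1 / 2 * (dB A β σ B S C δ m p * (x m p - UB A β σ B S C δ m p) ^ 2))
          + b * (GB A α β σ B S C (UB A β σ B S C δ) δ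
            + ∑ m, ∑ p, 1 / 2 * (dB A β σ B S C δ m p * (y m p - UB A β σ B S C δ m p) ^ 2))
          = GB A α β σ B S C (UB A β σ B S C δ) δ
            + (a * (∑ m, ∑ p, 1 / 2 * (dB A β σ B S C δ m p *
                (x m p - UB A β σ B S C δ m p) ^ 2))
              + b * (∑ m, ∑ p, 1 / 2 * (dB A β σ B S C δ m p *
                (y m p - UB A β σ B S C δ m p) ^ 2))) := by
        linear_combination GB A α β σ B S C (UB A β σ B S C δ) δ * hab
      rw [hcomb]
      linarith [hsum]
  · -- strict minimality
    intro B' hB' hne'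
    rw [hQ B' hB']
    linarith [hposSum B' hB' hne']
  · -- characterization of the minimizer
    intro B' hB'
    constructor
    · intro h
      ext m p
      by_cases hp : p ∈ IsetB A β B S C m
      · have h1 := h m p hp
        have h2 := hkkt m p hp
        have hd := hdpos m p hp
        have heq : dB A β σ B S C δ m p * (B' m p - B m p)
            = dB A β σ B S C δ m p * (UB A β σ B S C δ m p - B m p) := by linarith
        have := mul_left_cancel₀ (ne_of_gt hd) heq
        linarith
      · rw [hB' m p hp, hUeq m p hp]
    · rintro rfl
      exact hkkt
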